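/- Let F : ℝⁿ → ℝⁿ be a polynomial map such that the Jacobian matrix DF(x) has rank n (equivalently, is invertible) at every point x ∈ ℝⁿ. Then the solution set Sol(ℝⁿ, F) of the unconstrained variational inequality, which equals the zero set {x ∈ ℝⁿ : F(x) = 0}, has finitely many points. -/

import Mathlib

/-- The Jacobian matrix of a map `F : ℝⁿ → ℝⁿ` at `x`. -/
noncomputable def jac {n : ℕ} (F : (Fin n → ℝ) → (Fin n → ℝ)) (x : Fin n → ℝ) :
    Matrix (Fin n) (Fin n) ℝ :=
  Matrix.of fun a b => fderiv ℝ (fun y => F y a) x (Pi.single b 1)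

/-!
Testing the variational inequality at `y = x - F x` gives `‖F x‖² ≤ 0`, so its solutions are
the zeros of `F = (P₁, …, Pₙ)`. A zero `x` corresponds to the maximal ideal `mₓ = ker (eval x)`,
which contains `I = (P₁, …, Pₙ)`. Expanding each `Pₐ` to first order at `x` and inverting
`DF(x)` expresses every `Xⱼ - xⱼ` modulo `mₓ²` through the `Pₐ`, so `mₓ ≤ I ⊔ mₓ²`; by
Nakayama's lemma `mₓ` is then a minimal prime over `I`. The polynomial ring is Noetherian, so
there are only finitely many such primes, and `x ↦ mₓ` is injective.
-/

theorem Ideal.mem_minimalPrimes_of_le_sup_sq {R : Type*} [CommRing R] {I P : Ideal R}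
    (hP : P.IsPrime) (hfg : P.FG) (hIP : I ≤ P) (hPI : P ≤ I ⊔ P ^ 2) :
    P ∈ I.minimalPrimes := by
  set N : Submodule R (R ⧸ I) := Submodule.map I.mkQ P
  have hN : N ≤ P • N :=
    calc N ≤ Submodule.map I.mkQ (I ⊔ P ^ 2) := Submodule.map_mono hPI
      _ = P • N := by
        rw [Submodule.map_sup, Submodule.mkQ_map_self, bot_sup_eq, sq, ← smul_eq_mul,
          Submodule.map_smul'']
  obtain ⟨r, hr1, hr⟩ := Submodule.exists_sub_one_mem_and_smul_eq_zero_of_fg_of_le_smul P N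
    (Submodule.FG.map I.mkQ hfg) hN
  have hrP : r ∉ P := fun h => hP.ne_top <| (P.eq_top_iff_one).2 <| by
    simpa using P.sub_mem h hr1
  refine ⟨⟨hP, hIP⟩, fun q ⟨hq, hIq⟩ hqP p hp => ?_⟩
  have hrp : r * p ∈ I := by
    have := hr _ (Submodule.mem_map_of_mem (f := I.mkQ) hp)
    rwa [Submodule.mkQ_apply, ← Submodule.Quotient.mk_smul, Submodule.Quotient.mk_eq_zero] at this
  exact (hq.mem_or_mem (hIq hrp)).resolve_left fun h => hrP (hqP h)

theorem Matrix.isUnit_of_rank_eq_card {K m : Type*} [Field K] [Fintype m] [DecidableEq m]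
    {A : Matrix m m K} (hA : A.rank = Fintype.card m) : IsUnit A := by
  have hrange : LinearMap.range A.mulVecLin = ⊤ :=
    Submodule.eq_top_of_finrank_eq (by rw [← Matrix.rank, hA, Module.finrank_fintype_fun_eq_card])
  exact Matrix.mulVec_surjective_iff_isUnit.1 (LinearMap.range_eq_top.1 hrange)

theorem forall_sum_mul_sub_nonneg_iff {K ι : Type*} [CommRing K] [LinearOrder K]
    [IsStrictOrderedRing K] [Fintype ι] (v x : ι → K) :
    (∀ y : ι → K, 0 ≤ ∑ i, v i * (y i - x i)) ↔ v = 0 := by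
  refine ⟨fun h => ?_, fun h y => by simp [h]⟩
  have hv : ∑ i, v i * v i ≤ 0 := by simpa using h (x - v)
  funext i
  exact (Finset.sum_mul_self_eq_zero_iff _ _).1
    (hv.antisymm (Finset.sum_nonneg fun i _ => mul_self_nonneg _)) i (Finset.mem_univ i)

namespace MvPolynomial

variable {R σ : Type*} [CommRing R]

theorem ker_eval_injective : Function.Injective fun x : σ → R => RingHom.ker (eval x) := by
  intro x y (hxy : RingHom.ker (eval x) = RingHom.ker (eval y))
  funext j
  have hX : X j - C (x j) ∈ RingHom.ker (eval y) := hxy ▸ by simp [RingHom.mem_ker]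
  simpa [RingHom.mem_ker, sub_eq_zero, eq_comm] using hX

variable [Fintype σ] [DecidableEq σ]

theorem sum_eval_pderiv_mul_X_smul {M : Type*} [AddCommMonoid M] [Module R M] (x : σ → R)
    (p : MvPolynomial σ R) (j : σ) (v : σ → M) :
    ∑ i, eval x (pderiv i (p * X j)) • v i =
      x j • ∑ i, eval x (pderiv i p) • v i + eval x p • v j := by
  simp [pderiv_X, Pi.single_apply, add_smul, mul_smul, Finset.sum_add_distrib, Finset.smul_sum,
    apply_ite, ite_smul, add_comm]

theorem sub_C_eval_sub_sum_pderiv_mem_ker_eval_sq (x : σ → R) (p : MvPolynomial σ R) :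
    p - C (eval x p) - ∑ j, eval x (pderiv j p) • (X j - C (x j)) ∈ RingHom.ker (eval x) ^ 2 := by
  induction p using MvPolynomial.induction_on with
  | C a => simp
  | add p q hp hq =>
    convert add_mem hp hq using 1
    simp only [map_add, add_smul, Finset.sum_add_distrib]
    ring
  | mul_X p j hp =>
    have hp₀ : p - C (eval x p) ∈ RingHom.ker (eval x) := by simp [RingHom.mem_ker]
    have hX : X j - C (x j) ∈ RingHom.ker (eval x) := by simp [RingHom.mem_ker]
    rw [sum_eval_pderiv_mul_X_smul]
    convert add_mem (sq (RingHom.ker (eval x)) ▸ Ideal.mul_mem_mul hp₀ hX)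
      (Ideal.mul_mem_left _ (C (x j)) hp) using 1
    simp only [smul_eq_C_mul, eval_mul, eval_X, C_mul]
    ring

theorem hasFDerivAt_eval (p : MvPolynomial σ ℝ) (x : σ → ℝ) :
    HasFDerivAt (fun y => eval y p)
      (∑ j, eval x (pderiv j p) • (ContinuousLinearMap.proj j : (σ → ℝ) →L[ℝ] ℝ)) x := by
  induction p using MvPolynomial.induction_on with
  | C a =>
    simp only [eval_C, pderiv_C, map_zero, zero_smul, Finset.sum_const_zero]
    exact hasFDerivAt_const a x
  | add p q hp hq =>
    simp only [map_add, add_smul, Finset.sum_add_distrib]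
    exact hp.add hq
  | mul_X p j hp =>
    simp only [sum_eval_pderiv_mul_X_smul, eval_mul, eval_X, add_comm (x j • _)]
    exact hp.mul (hasFDerivAt_apply j x)

noncomputable def jacobianAt (P : σ → MvPolynomial σ R) (x : σ → R) : Matrix σ σ R :=
  .of fun a b => eval x (pderiv b (P a))

theorem ker_eval_le_span_sup_sq (P : σ → MvPolynomial σ R) (x : σ → R)
    (hx : ∀ a, eval x (P a) = 0) (hJ : IsUnit (jacobianAt P x)) :
    RingHom.ker (eval x) ≤ Ideal.span (Set.range P) ⊔ RingHom.ker (eval x) ^ 2 := by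
  set π := Ideal.Quotient.mk (Ideal.span (Set.range P) ⊔ RingHom.ker (eval x) ^ 2)
  have hπ : ∀ p, π p =
      π (C (eval x p)) + ∑ j, π (C (eval x (pderiv j p))) * π (X j - C (x j)) := by
    intro p
    have h : π (p - C (eval x p) - ∑ j, eval x (pderiv j p) • (X j - C (x j))) = 0 :=
      Ideal.Quotient.eq_zero_iff_mem.2
        (Ideal.mem_sup_right (sub_C_eval_sub_sum_pderiv_mem_ker_eval_sq x p))
    rw [map_sub, map_sub, map_sum] at h
    simp only [smul_eq_C_mul, map_mul] at h
    linear_combination h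
  -- Modulo `I ⊔ mₓ²` the expansions of the `Pₐ` say `DF(x) *ᵥ (Xⱼ - xⱼ)ⱼ = 0`.
  have hw : (fun j => π (X j - C (x j))) = 0 := by
    apply Matrix.mulVec_injective_of_isUnit (hJ.map (π.comp C).mapMatrix)
    funext a
    have h := hπ (P a)
    have hPa : π (P a) = 0 :=
      Ideal.Quotient.eq_zero_iff_mem.2 (Ideal.mem_sup_left (Ideal.subset_span ⟨a, rfl⟩))
    rw [hPa, hx a] at h
    simpa [Matrix.mulVec, dotProduct, jacobianAt] using h.symm
  intro p hp
  rw [← Ideal.Quotient.eq_zero_iff_mem, hπ p, RingHom.mem_ker.1 hp]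
  simp only [congrFun hw, Pi.zero_apply, mul_zero, Finset.sum_const_zero, map_zero, add_zero]

variable [IsDomain R]

theorem ker_eval_mem_minimalPrimes [IsNoetherianRing R] (P : σ → MvPolynomial σ R) (x : σ → R)
    (hx : ∀ a, eval x (P a) = 0) (hJ : IsUnit (jacobianAt P x)) :
    RingHom.ker (eval x) ∈ (Ideal.span (Set.range P)).minimalPrimes :=
  Ideal.mem_minimalPrimes_of_le_sup_sq (RingHom.ker_isPrime _) (IsNoetherian.noetherian _)
    (Ideal.span_le.2 <| Set.range_subset_iff.2 hx) (ker_eval_le_span_sup_sq P x hx hJ)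

theorem finite_setOf_forall_eval_eq_zero_of_isUnit_jacobianAt [IsNoetherianRing R]
    (P : σ → MvPolynomial σ R) (hJ : ∀ x, (∀ a, eval x (P a) = 0) → IsUnit (jacobianAt P x)) :
    {x | ∀ a, eval x (P a) = 0}.Finite :=
  ((Ideal.span (Set.range P)).finite_minimalPrimes_of_isNoetherianRing _).preimage
    ker_eval_injective.injOn |>.subset fun x hx => ker_eval_mem_minimalPrimes P x hx (hJ x hx)

end MvPolynomial

open MvPolynomial in
theorem jac_eq_jacobianAt {n : ℕ} {F : (Fin n → ℝ) → (Fin n → ℝ)}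
    {P : Fin n → MvPolynomial (Fin n) ℝ} (hP : ∀ a x, F x a = eval x (P a)) (x : Fin n → ℝ) :
    jac F x = jacobianAt P x := by
  ext a b
  have hFa : (fun y => F y a) = fun y => eval y (P a) := funext (hP a ·)
  simp [jac, jacobianAt, hFa, (hasFDerivAt_eval (P a) x).fderiv, Pi.single_apply]

/-- Let `F : ℝⁿ → ℝⁿ` be a polynomial map whose Jacobian `DF(x)` has
rank `n` at every `x`.  Then the solution set `Sol(ℝⁿ, F)` of the unconstrained
variational inequality, which equals the zero set `{x : F x = 0}`, is finite. -/
theorem unconstrained_solution_set_finite {n : ℕ}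
    (F : (Fin n → ℝ) → (Fin n → ℝ))
    (hFpoly : ∀ i, ∃ P : MvPolynomial (Fin n) ℝ, ∀ x, F x i = MvPolynomial.eval x P)
    (hrank : ∀ x, (jac F x).rank = n) :
    {x : Fin n → ℝ | ∀ y : Fin n → ℝ, 0 ≤ ∑ i, F x i * (y i - x i)} =
      {x : Fin n → ℝ | F x = 0} ∧
    Set.Finite {x : Fin n → ℝ | ∀ y : Fin n → ℝ, 0 ≤ ∑ i, F x i * (y i - x i)} := by
  have hsol : {x : Fin n → ℝ | ∀ y : Fin n → ℝ, 0 ≤ ∑ i, F x i * (y i - x i)} =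
      {x | F x = 0} :=
    Set.ext fun x => forall_sum_mul_sub_nonneg_iff (F x) x
  refine ⟨hsol, ?_⟩
  choose P hP using hFpoly
  have hzeros : {x : Fin n → ℝ | F x = 0} = {x | ∀ a, MvPolynomial.eval x (P a) = 0} := by
    ext x
    simp [funext_iff, hP]
  rw [hsol, hzeros]
  refine MvPolynomial.finite_setOf_forall_eval_eq_zero_of_isUnit_jacobianAt P fun x _ => ?_
  rw [← jac_eq_jacobianAt hP]
  exact Matrix.isUnit_of_rank_eq_card (by rw [hrank, Fintype.card_fin])
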